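/- There exists a function ρ₁ : (0, 1/2) → ℝ with ρ₁(δ)/δ → 0 as δ → 0⁺ such that for every δ ∈ (0, 1/2) and every ξ ∈ ℝ with |ξ| > δ/(4π), one has |g_δ(ξ)| ≤ 1 − δ(1 − (4/5)^{1/4}) + ρ₁(δ). -/

import Mathlib

/-!
Substituting `u = x²` writes `g_δ(ξ) = δ G_δ(ξ) + (1 - δ) G_{1-δ}(ξ)`, where
`G_c(ξ) = ∫₀^∞ 2 M_{1/(2c)}(x) e^{-2πiξx²} dx` is a complex Gaussian integral equal to
`(c / (c + 2πiξ))^{1/2}`. Hence `|G_c(ξ)| = (c² / (c² + 4π²ξ²))^{1/4}`, which is at most `1`, and at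
most `(4/5)^{1/4}` once `|ξ| ≥ c/(4π)`. The triangle inequality gives the bound with `ρ₁ = 0`.
-/

open MeasureTheory Real Set Filter

noncomputable section

/-- The centered Gaussian density `M_a(v) = e^{-v²/(2a)}/√(2πa)` with variance `a`. -/
def gaussM (a v : ℝ) : ℝ := Real.exp (-v ^ 2 / (2 * a)) / Real.sqrt (2 * π * a)

/-- `f_δ = δ M_{1/(2δ)} + (1-δ) M_{1/(2(1-δ))}`. -/
def fdel (δ v : ℝ) : ℝ :=
  δ * gaussM (1 / (2 * δ)) v + (1 - δ) * gaussM (1 / (2 * (1 - δ))) v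

/-- `h_δ(u) = f_δ(√u)/√u` (for `u > 0`). -/
def hdel (δ u : ℝ) : ℝ := fdel δ (Real.sqrt u) / Real.sqrt u

/-- `g_δ(ξ) = ∫_0^∞ h_δ(u) e^{-2πiξu} du`, the Fourier transform of `h_δ`. -/
def gdel (δ ξ : ℝ) : ℂ :=
  ∫ u in Ioi (0 : ℝ),
    (hdel δ u : ℂ) * Complex.exp (-(2 : ℂ) * (π : ℂ) * Complex.I * (ξ : ℂ) * (u : ℂ))

section

open Complex

def gaussSqFourier (c ξ : ℝ) : ℂ :=
  ∫ x in Ioi (0 : ℝ), (2 * gaussM (1 / (2 * c)) x : ℂ) * cexp (-2 * π * I * ξ * (x : ℂ) ^ 2)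

lemma gaussM_inv_two_mul {c : ℝ} (hc : 0 < c) (x : ℝ) :
    gaussM (1 / (2 * c)) x = Real.exp (-c * x ^ 2) / √(π / c) := by
  rw [gaussM]
  congr 2 <;> field_simp

lemma two_mul_gaussM_mul_cexp {c : ℝ} (hc : 0 < c) (ξ x : ℝ) :
    (2 * gaussM (1 / (2 * c)) x : ℂ) * cexp (-2 * π * I * ξ * (x : ℂ) ^ 2) =
      (2 / √(π / c) : ℝ) * cexp (-(c + 2 * π * ξ * I) * (x : ℂ) ^ 2) := by
  rw [gaussM_inv_two_mul hc]
  push_cast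
  rw [mul_div_assoc', div_mul_eq_mul_div, mul_assoc, ← Complex.exp_add, mul_div_right_comm]
  ring_nf

lemma gaussSqFourier_eq {c : ℝ} (hc : 0 < c) (ξ : ℝ) :
    gaussSqFourier c ξ = (2 / √(π / c) : ℝ) * ((π / (c + 2 * π * ξ * I)) ^ (1 / 2 : ℂ) / 2) := by
  simp_rw [gaussSqFourier, two_mul_gaussM_mul_cexp hc, integral_const_mul]
  rw [integral_gaussian_complex_Ioi (by simp [hc])]

lemma integrable_two_mul_gaussM_mul_cexp {c : ℝ} (hc : 0 < c) (ξ : ℝ) :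
    Integrable fun x : ℝ =>
      (2 * gaussM (1 / (2 * c)) x : ℂ) * cexp (-2 * π * I * ξ * (x : ℂ) ^ 2) := by
  simp_rw [two_mul_gaussM_mul_cexp hc]
  exact (integrable_cexp_neg_mul_sq (by simp [hc])).const_mul _

lemma norm_gaussSqFourier {c : ℝ} (hc : 0 < c) (ξ : ℝ) :
    ‖gaussSqFourier c ξ‖ = √(c / √(c ^ 2 + (2 * π * ξ) ^ 2)) := by
  have hb : 0 < √(c ^ 2 + (2 * π * ξ) ^ 2) := Real.sqrt_pos.2 (by positivity)
  rw [gaussSqFourier_eq hc, show (1 / 2 : ℂ) = ((1 / 2 : ℝ) : ℂ) by norm_num, norm_mul, norm_div,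
    norm_cpow_real, norm_div, norm_real, norm_real, norm_of_nonneg pi_pos.le,
    show (c + 2 * π * ξ * I : ℂ) = c + ((2 * π * ξ : ℝ) : ℂ) * I by push_cast; ring,
    norm_add_mul_I, ← Real.sqrt_eq_rpow, Real.norm_of_nonneg (by positivity),
    Real.sqrt_div' _ hb.le, Real.sqrt_div pi_pos.le, Real.sqrt_div' _ hb.le]
  have := Real.sqrt_pos.2 pi_pos
  have := Real.sqrt_pos.2 hc
  field_simp
  norm_num

lemma norm_gaussSqFourier_le_one {c : ℝ} (hc : 0 < c) (ξ : ℝ) : ‖gaussSqFourier c ξ‖ ≤ 1 := by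
  have hcb : c ≤ √(c ^ 2 + (2 * π * ξ) ^ 2) := Real.le_sqrt_of_sq_le (by nlinarith)
  rw [norm_gaussSqFourier hc, Real.sqrt_le_one, div_le_one (hc.trans_le hcb)]
  exact hcb

lemma norm_gaussSqFourier_le_of_le_abs {c ξ : ℝ} (hc : 0 < c) (hξ : c / (4 * π) ≤ |ξ|) :
    ‖gaussSqFourier c ξ‖ ≤ (4 / 5 : ℝ) ^ ((1 : ℝ) / 4) := by
  have hb : 0 < √(c ^ 2 + (2 * π * ξ) ^ 2) := Real.sqrt_pos.2 (by positivity)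
  have hb_sq : √(c ^ 2 + (2 * π * ξ) ^ 2) ^ 2 = c ^ 2 + (2 * π * ξ) ^ 2 :=
    Real.sq_sqrt (by positivity)
  have hcξ : c ^ 2 ≤ (4 * π * ξ) ^ 2 := by
    rw [div_le_iff₀ (by positivity)] at hξ
    calc c ^ 2 ≤ (|ξ| * (4 * π)) ^ 2 := pow_le_pow_left₀ hc.le hξ 2
      _ = (4 * π * ξ) ^ 2 := by rw [mul_pow, sq_abs]; ring
  have hratio : c / √(c ^ 2 + (2 * π * ξ) ^ 2) ≤ √(4 / 5) := by
    rw [Real.le_sqrt (by positivity) (by norm_num), div_pow, div_le_iff₀ (by positivity), hb_sq]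
    nlinarith
  rw [norm_gaussSqFourier hc, show (4 / 5 : ℝ) ^ ((1 : ℝ) / 4) = √(√(4 / 5)) by
    rw [Real.sqrt_eq_rpow, Real.sqrt_eq_rpow, ← Real.rpow_mul (by norm_num)]; norm_num]
  exact Real.sqrt_le_sqrt hratio

lemma gdel_eq_integral_sq (δ ξ : ℝ) :
    gdel δ ξ = ∫ x in Ioi (0 : ℝ), (2 * fdel δ x : ℂ) * cexp (-2 * π * I * ξ * (x : ℂ) ^ 2) := by
  rw [gdel, ← integral_comp_rpow_Ioi_of_pos two_pos]
  refine setIntegral_congr_fun measurableSet_Ioi fun x (hx : 0 < x) => ?_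
  have hx2 : x ^ (2 : ℝ) = x ^ 2 := Real.rpow_two x
  rw [hx2, show (2 : ℝ) - 1 = 1 by norm_num, Real.rpow_one, hdel, Real.sqrt_sq hx.le, real_smul]
  have : (x : ℂ) ≠ 0 := by exact_mod_cast hx.ne'
  push_cast
  field_simp

lemma gdel_eq_add {δ : ℝ} (h0 : 0 < δ) (h1 : δ < 1) (ξ : ℝ) :
    gdel δ ξ = δ * gaussSqFourier δ ξ + (1 - δ : ℝ) * gaussSqFourier (1 - δ) ξ := by
  have h1' : 0 < 1 - δ := by linarith
  rw [gdel_eq_integral_sq, gaussSqFourier, gaussSqFourier, ← integral_const_mul,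
    ← integral_const_mul, ← integral_add
      ((integrable_two_mul_gaussM_mul_cexp h0 ξ).const_mul _).integrableOn
      ((integrable_two_mul_gaussM_mul_cexp h1' ξ).const_mul _).integrableOn]
  congr 1 with x
  simp only [fdel]
  push_cast
  ring

end

theorem gdel_decay_outside :
    ∃ ρ₁ : ℝ → ℝ,
      Tendsto (fun δ => ρ₁ δ / δ) (nhdsWithin 0 (Ioi 0)) (nhds 0) ∧
      ∀ δ ∈ Ioo (0 : ℝ) (1 / 2), ∀ ξ : ℝ, δ / (4 * π) < |ξ| →
        ‖gdel δ ξ‖ ≤ 1 - δ * (1 - (4 / 5 : ℝ) ^ ((1 : ℝ) / 4)) + ρ₁ δ := by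
  refine ⟨0, by simp, ?_⟩
  rintro δ ⟨h0, h_half⟩ ξ hξ
  have h1 : 0 < 1 - δ := by linarith
  have hfar := norm_gaussSqFourier_le_of_le_abs h0 hξ.le
  have hnear := norm_gaussSqFourier_le_one h1 ξ
  calc ‖gdel δ ξ‖
      ≤ δ * ‖gaussSqFourier δ ξ‖ + (1 - δ) * ‖gaussSqFourier (1 - δ) ξ‖ := by
        rw [gdel_eq_add h0 (by linarith)]
        refine (norm_add_le _ _).trans_eq ?_
        rw [norm_mul, norm_mul, Complex.norm_real, Complex.norm_real, Real.norm_of_nonneg h0.le,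
          Real.norm_of_nonneg h1.le]
    _ ≤ δ * (4 / 5 : ℝ) ^ ((1 : ℝ) / 4) + (1 - δ) * 1 := by gcongr
    _ = _ := by simp only [Pi.zero_apply]; ring

end
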